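/- arXiv:1212.6390 — 2 statements merged into one kernel-verified Lean document; each statement's English description precedes it below -/
import Mathlib

section
/- Fix an integer d ≥ 2 and k ∈ (−π,π)^d. For ι ∈ {2, 3, …, d} define v⃗^{(ι)} = (1 + e^{i k_ι})·(e^{i k_1}·e⃗_1 + e⃗_{−1}) − (1 + e^{i k_1})·(e^{i k_ι}·e⃗_ι + e⃗_{−ι}) ∈ ℂ^I. Then for every such ι, A[k]·v⃗^{(ι)} = −v⃗^{(ι)}, and the d−1 vectors v⃗^{(2)}, …, v⃗^{(d)} are linearly independent; in particular the eigenvalue −1 of A[k] has geometric multiplicity at least d−1 for every k. -/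
open scoped BigOperators
open Matrix

noncomputable section

/-- The index set `I = {-d, …, -1, 1, …, d}`. -/
def Idx (d : ℕ) : Finset ℤ := (Finset.Icc (-(d : ℤ)) d).erase 0

lemma mem_Idx {d : ℕ} {ι : ℤ} (h : ι ∈ Idx d) : ι ≠ 0 ∧ -(d : ℤ) ≤ ι ∧ ι ≤ d := by
  simpa [Idx, Finset.mem_erase, Finset.mem_Icc, and_assoc] using h

lemma mem_Idx' {d : ℕ} {ι : ℤ} (h1 : ι ≠ 0) (h2 : -(d : ℤ) ≤ ι) (h3 : ι ≤ d) :
    ι ∈ Idx d := by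
  simp [Idx, Finset.mem_erase, Finset.mem_Icc]; omega

/-- `k_ι = sign(ι) · k_{|ι|}` (with `|ι| ∈ {1,…,d}` re-indexed as `Fin d`). -/
def kc {d : ℕ} (k : Fin d → ℝ) (ι : Idx d) : ℝ :=
  (ι.1.sign : ℝ) * k ⟨ι.1.natAbs - 1, by
    obtain ⟨h1, h2, h3⟩ := mem_Idx ι.2; omega⟩

/-- The negation `-ι` as an element of the index set. -/
def negIdx {d : ℕ} (ι : Idx d) : Idx d :=
  ⟨-ι.1, by obtain ⟨h1, h2, h3⟩ := mem_Idx ι.2; exact mem_Idx' (by omega) (by omega) (by omega)⟩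

/-- The coordinate vector `e⃗_ι ∈ ℂ^I`. -/
def eVec {d : ℕ} (ι : Idx d) : Idx d → ℂ := fun κ => if κ = ι then 1 else 0

/-- The unit step `e_ι = sign(ι)·(basis vector |ι|)` in `ℤ^d`. -/
def stepVec {d : ℕ} (ι : Idx d) : Fin d → ℤ :=
  fun j => if (j : ℕ) = ι.1.natAbs - 1 then ι.1.sign else 0

/-- The all-ones matrix `C`. -/
def matC (d : ℕ) : Matrix (Idx d) (Idx d) ℂ := Matrix.of fun _ _ => 1

/-- The matrix `J` with `J_{ι,κ} = δ_{ι,-κ}`. -/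
def matJ (d : ℕ) : Matrix (Idx d) (Idx d) ℂ :=
  Matrix.of fun ι κ => if ι.1 = -κ.1 then 1 else 0

/-- The diagonal matrix `D[k]` with entries `e^{i k_ι}`. -/
def matD {d : ℕ} (k : Fin d → ℝ) : Matrix (Idx d) (Idx d) ℂ :=
  Matrix.diagonal fun ι => Complex.exp (Complex.I * (kc k ι : ℂ))

/-- The NBW transition matrix `A[k] = (C − J)·D[−k]`. -/
def matA {d : ℕ} (k : Fin d → ℝ) : Matrix (Idx d) (Idx d) ℂ :=
  (matC d - matJ d) * matD (-k)

/-- `ω` is an `n`-step nearest-neighbour non-backtracking walk on `ℤ^d`. -/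
def IsNBW (d n : ℕ) (ω : Fin (n + 1) → (Fin d → ℤ)) : Prop :=
  ω 0 = 0 ∧
  (∀ i : ℕ, ∀ hi : i < n,
    (∑ j, |ω ⟨i + 1, by omega⟩ j - ω ⟨i, by omega⟩ j|) = 1) ∧
  (∀ i : ℕ, ∀ hi : i + 2 ≤ n, ω ⟨i + 2, by omega⟩ ≠ ω ⟨i, by omega⟩)

/-- `b_n(x)`: the number of `n`-step NBWs ending at `x`. -/
def bc (d n : ℕ) (x : Fin d → ℤ) : ℕ :=
  Nat.card {ω : Fin (n + 1) → (Fin d → ℤ) // IsNBW d n ω ∧ ω (Fin.last n) = x}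

/-- `b_n^ι(x)`: the number of `n`-step NBWs ending at `x` whose first step is not `e_ι`. -/
def bcRes (d n : ℕ) (ι : Idx d) (x : Fin d → ℤ) : ℕ :=
  Nat.card {ω : Fin (n + 1) → (Fin d → ℤ) //
    IsNBW d n ω ∧ ω (Fin.last n) = x ∧ ∀ _ : 1 ≤ n, ω ⟨1, by omega⟩ ≠ stepVec ι}

/-- Fourier transform `f̂(k) = Σ_x f(x) e^{i k·x}` of a (finitely supported) `f : ℤ^d → ℕ`. -/
def fhat {d : ℕ} (f : (Fin d → ℤ) → ℕ) (k : Fin d → ℝ) : ℂ :=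
  ∑' x : Fin d → ℤ, (f x : ℂ) * Complex.exp (Complex.I * ∑ j, (k j : ℂ) * (x j : ℂ))

/-- `b̂_n(k)`. -/
def bhat (d n : ℕ) (k : Fin d → ℝ) : ℂ := fhat (bc d n) k

/-- `b⃗_n(k)`, the vector with entries `b̂_n^ι(k)`. -/
def bvec (d n : ℕ) (k : Fin d → ℝ) : Idx d → ℂ := fun ι => fhat (bcRes d n ι) k

/-- `D̂(k) = (1/d) Σ_j cos k_j`. -/
def Dhat {d : ℕ} (k : Fin d → ℝ) : ℝ := (1 / d) * ∑ j, Real.cos (k j)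


/-- The index `1 ∈ I` (for `d ≥ 1`). -/
def idxOne (d : ℕ) (hd : 1 ≤ d) : Idx d :=
  ⟨1, mem_Idx' (by omega) (by omega) (by omega)⟩

/-- The vector `v⃗^{(ι)} = (1+e^{ik_ι})(e^{ik_1}e⃗_1 + e⃗_{−1}) − (1+e^{ik_1})(e^{ik_ι}e⃗_ι + e⃗_{−ι})`. -/
def vMinusOne {d : ℕ} (hd : 1 ≤ d) (k : Fin d → ℝ) (ι : Idx d) : Idx d → ℂ :=
  (1 + Complex.exp (Complex.I * (kc k ι : ℂ))) •
      (Complex.exp (Complex.I * (kc k (idxOne d hd) : ℂ)) • eVec (idxOne d hd) +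
        eVec (negIdx (idxOne d hd)))
    - (1 + Complex.exp (Complex.I * (kc k (idxOne d hd) : ℂ))) •
      (Complex.exp (Complex.I * (kc k ι : ℂ)) • eVec ι + eVec (negIdx ι))

-- === aux ===
lemma negIdx_negIdx {d : ℕ} (ι : Idx d) : negIdx (negIdx ι) = ι := Subtype.ext (neg_neg _)

lemma kc_negIdx {d : ℕ} (k : Fin d → ℝ) (ι : Idx d) : kc k (negIdx ι) = - kc k ι := by
  unfold kc
  have h2 : k ⟨(negIdx ι).1.natAbs - 1, by obtain ⟨h1,h2,h3⟩ := mem_Idx (negIdx ι).2; omega⟩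
      = k ⟨ι.1.natAbs - 1, by obtain ⟨h1,h2,h3⟩ := mem_Idx ι.2; omega⟩ := by
    congr 1
    exact Fin.ext (by simp [negIdx])
  rw [h2]
  have h1 : (((negIdx ι).1.sign : ℤ) : ℝ) = -((ι.1.sign : ℤ) : ℝ) := by
    simp [negIdx]
  rw [h1]; ring

lemma kc_neg {d : ℕ} (k : Fin d → ℝ) (ι : Idx d) : kc (-k) ι = - kc k ι := by
  unfold kc; simp

lemma v_apply {d : ℕ} (hd1 : 1 ≤ d) (k : Fin d → ℝ) (ι ρ : Idx d) :
    vMinusOne hd1 k ι ρ =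
      (1 + Complex.exp (Complex.I * (kc k ι : ℂ))) *
          Complex.exp (Complex.I * (kc k (idxOne d hd1) : ℂ)) *
          (if ρ = idxOne d hd1 then 1 else 0)
        + (1 + Complex.exp (Complex.I * (kc k ι : ℂ))) *
          (if ρ = negIdx (idxOne d hd1) then 1 else 0)
        - (1 + Complex.exp (Complex.I * (kc k (idxOne d hd1) : ℂ))) *
          Complex.exp (Complex.I * (kc k ι : ℂ)) * (if ρ = ι then 1 else 0)
        - (1 + Complex.exp (Complex.I * (kc k (idxOne d hd1) : ℂ))) *
          (if ρ = negIdx ι then 1 else 0) := by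
  simp only [vMinusOne, Pi.sub_apply, Pi.add_apply, Pi.smul_apply, smul_eq_mul, eVec]
  ring

lemma exp_neg_mul (x : ℝ) :
    Complex.exp (Complex.I * ((-x : ℝ) : ℂ)) = (Complex.exp (Complex.I * (x : ℂ)))⁻¹ := by
  push_cast
  rw [mul_neg, Complex.exp_neg]

lemma mulVecCJ {d : ℕ} (w : Idx d → ℂ) (ρ : Idx d) :
    ((matC d - matJ d) *ᵥ w) ρ = (∑ κ, w κ) - w (negIdx ρ) := by
  simp only [Matrix.sub_mulVec, Pi.sub_apply]
  congr 1
  · simp [matC, Matrix.mulVec, dotProduct]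
  · simp only [matJ, Matrix.mulVec, dotProduct, Matrix.of_apply]
    rw [Finset.sum_eq_single (negIdx ρ)]
    · simp [negIdx]
    · intro κ _ hκ
      rw [if_neg, zero_mul]
      intro h
      exact hκ (Subtype.ext (by simp [negIdx]; omega))
    · simp

lemma idx_ne {d : ℕ} {a b : Idx d} (h : a.1 ≠ b.1) : a ≠ b :=
  fun e => h (congrArg Subtype.val e)

lemma sum_zero {d : ℕ} (hd1 : 1 ≤ d) (k : Fin d → ℝ) (ι : Idx d) :
    ∑ κ, Complex.exp (Complex.I * ((- kc k κ : ℝ) : ℂ)) * vMinusOne hd1 k ι κ = 0 := by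
  simp only [v_apply hd1 k ι, mul_sub, mul_add, mul_ite, mul_one, mul_zero]
  rw [Finset.sum_sub_distrib, Finset.sum_sub_distrib, Finset.sum_add_distrib]
  simp only [Finset.sum_ite_eq', Finset.mem_univ, if_true]
  rw [kc_negIdx, kc_negIdx, neg_neg, neg_neg]
  rw [exp_neg_mul, exp_neg_mul]
  have h1 := Complex.exp_ne_zero (Complex.I * ((kc k (idxOne d hd1) : ℝ) : ℂ))
  have h2 := Complex.exp_ne_zero (Complex.I * ((kc k ι : ℝ) : ℂ))
  field_simp
  ring

lemma step {d : ℕ} (hd1 : 1 ≤ d) (k : Fin d → ℝ) (ι : Idx d) (hι : 2 ≤ ι.1) (ρ : Idx d) :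
    Complex.exp (Complex.I * ((kc k ρ : ℝ) : ℂ)) * vMinusOne hd1 k ι (negIdx ρ)
      = vMinusOne hd1 k ι ρ := by
  have f1 : idxOne d hd1 ≠ negIdx (idxOne d hd1) := idx_ne (show (1:ℤ) ≠ -1 by norm_num)
  have f2 : idxOne d hd1 ≠ ι := idx_ne (show (1:ℤ) ≠ ι.1 by omega)
  have f3 : idxOne d hd1 ≠ negIdx ι := idx_ne (show (1:ℤ) ≠ -ι.1 by omega)
  have f4 : negIdx (idxOne d hd1) ≠ ι := idx_ne (show (-1:ℤ) ≠ ι.1 by omega)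
  have f5 : negIdx (idxOne d hd1) ≠ negIdx ι := idx_ne (show (-1:ℤ) ≠ -ι.1 by omega)
  have f6 : ι ≠ negIdx ι := idx_ne (show ι.1 ≠ -ι.1 by omega)
  have F1 := Ne.symm f1
  have F2 := Ne.symm f2
  have F3 := Ne.symm f3
  have F4 := Ne.symm f4
  have F5 := Ne.symm f5
  have F6 := Ne.symm f6
  by_cases h1 : ρ = idxOne d hd1
  · subst h1
    simp [v_apply, f1, F1, f2, F2, f3, F3, f4, F4, f5, F5, f6, F6, Complex.exp_neg]
    try field_simp [Complex.exp_ne_zero]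
    try ring
  · by_cases h2 : ρ = negIdx (idxOne d hd1)
    · subst h2
      rw [kc_negIdx, negIdx_negIdx]
      simp [v_apply, f1, F1, f2, F2, f3, F3, f4, F4, f5, F5, f6, F6, Complex.exp_neg]
      try field_simp [Complex.exp_ne_zero]
      try ring
    · by_cases h3 : ρ = ι
      · subst h3
        simp [v_apply, f1, F1, f2, F2, f3, F3, f4, F4, f5, F5, f6, F6, Complex.exp_neg]
        try field_simp [Complex.exp_ne_zero]
        try ring
      · by_cases h4 : ρ = negIdx ι
        · subst h4
          rw [kc_negIdx, negIdx_negIdx]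
          simp [v_apply, f1, F1, f2, F2, f3, F3, f4, F4, f5, F5, f6, F6, Complex.exp_neg]
          try field_simp [Complex.exp_ne_zero]
          try ring
        · have g1 : negIdx ρ ≠ idxOne d hd1 := fun h => h2 (by rw [← negIdx_negIdx ρ, h])
          have g2 : negIdx ρ ≠ negIdx (idxOne d hd1) :=
            fun h => h1 (by rw [← negIdx_negIdx ρ, h, negIdx_negIdx])
          have g3 : negIdx ρ ≠ ι := fun h => h4 (by rw [← negIdx_negIdx ρ, h])
          have g4 : negIdx ρ ≠ negIdx ι :=
            fun h => h3 (by rw [← negIdx_negIdx ρ, h, negIdx_negIdx])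
          simp [v_apply, g1, g2, g3, g4, h1, h2, h3, h4]

lemma eigen {d : ℕ} (hd1 : 1 ≤ d) (k : Fin d → ℝ) (ι : Idx d) (hι : 2 ≤ ι.1) :
    matA k *ᵥ vMinusOne hd1 k ι = -vMinusOne hd1 k ι := by
  funext ρ
  rw [matA, ← Matrix.mulVec_mulVec, mulVecCJ]
  have hD : ∀ κ, (matD (-k) *ᵥ vMinusOne hd1 k ι) κ
      = Complex.exp (Complex.I * ((- kc k κ : ℝ) : ℂ)) * vMinusOne hd1 k ι κ := by
    intro κ
    rw [matD, Matrix.mulVec_diagonal, kc_neg]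
  simp only [hD]
  rw [sum_zero hd1 k ι, zero_sub, kc_negIdx, neg_neg, step hd1 k ι hι ρ, Pi.neg_apply]

lemma one_add_exp_ne_zero {x : ℝ} (hx : x ∈ Set.Ioo (-Real.pi) Real.pi) :
    (1 : ℂ) + Complex.exp (Complex.I * (x : ℂ)) ≠ 0 := by
  intro h
  have hre : (1 : ℝ) + Real.cos x = 0 := by
    have h2 := congrArg Complex.re h
    rwa [mul_comm, Complex.add_re, Complex.one_re, Complex.exp_ofReal_mul_I_re,
      Complex.zero_re] at h2
  have hcos : Real.cos x = -1 := by linarith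
  have hlt : |x| < Real.pi := abs_lt.mpr ⟨hx.1, hx.2⟩
  have habs : |x| = Real.pi :=
    Real.injOn_cos ⟨abs_nonneg x, hlt.le⟩ ⟨Real.pi_pos.le, le_rfl⟩
      (by rw [Real.cos_abs, hcos, Real.cos_pi])
  exact absurd habs hlt.ne

lemma card_sub (d : ℕ) (hd : 2 ≤ d) : Fintype.card {ι : Idx d // 2 ≤ ι.1} = d - 1 := by
  have e : {ι : Idx d // 2 ≤ ι.1} ≃ {x : ℤ // x ∈ Finset.Icc (2:ℤ) (d:ℤ)} :=
    { toFun := fun i => ⟨i.1.1, Finset.mem_Icc.mpr ⟨i.2, (mem_Idx i.1.2).2.2⟩⟩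
      invFun := fun x => ⟨⟨x.1, mem_Idx' (by have := Finset.mem_Icc.mp x.2; omega)
          (by have := Finset.mem_Icc.mp x.2; omega)
          (by have := Finset.mem_Icc.mp x.2; omega)⟩,
        (Finset.mem_Icc.mp x.2).1⟩
      left_inv := fun i => Subtype.ext (Subtype.ext rfl)
      right_inv := fun x => rfl }
  rw [Fintype.card_congr e, Fintype.card_coe, Int.card_Icc]
  omega

/-- for `ι ∈ {2,…,d}`, `A[k]·v⃗^{(ι)} = −v⃗^{(ι)}`, the vectors
`v⃗^{(2)},…,v⃗^{(d)}` are linearly independent, and the eigenvalue `−1` of `A[k]`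
has geometric multiplicity at least `d−1`. -/
theorem nbw_eigenvalue_neg_one (d : ℕ) (hd : 2 ≤ d) (k : Fin d → ℝ)
    (hk : ∀ j, k j ∈ Set.Ioo (-Real.pi) Real.pi) :
    (∀ ι : Idx d, 2 ≤ ι.1 →
      matA k *ᵥ vMinusOne (by omega) k ι = -vMinusOne (by omega) k ι) ∧
    LinearIndependent ℂ (fun ι : {ι : Idx d // 2 ≤ ι.1} => vMinusOne (by omega) k ι.1) ∧
    (d - 1 : ℕ) ≤ Module.finrank ℂ
      ↥(Module.End.eigenspace (Matrix.toLin' (matA k)) (-1)) := by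
  have hd1 : 1 ≤ d := by omega
  have hpart1 : ∀ ι : Idx d, 2 ≤ ι.1 →
      matA k *ᵥ vMinusOne hd1 k ι = -vMinusOne hd1 k ι :=
    fun ι hι => eigen hd1 k ι hι
  have hne : (1 : ℂ) + Complex.exp (Complex.I * ((kc k (idxOne d hd1) : ℝ) : ℂ)) ≠ 0 := by
    apply one_add_exp_ne_zero
    have hkc : kc k (idxOne d hd1) = k ⟨0, by omega⟩ := by
      simp [kc, idxOne]
    rw [hkc]; exact hk _
  have hpart2 : LinearIndependent ℂ
      (fun ι : {ι : Idx d // 2 ≤ ι.1} => vMinusOne hd1 k ι.1) := by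
    rw [Fintype.linearIndependent_iff]
    intro g hg i
    have hkey := congrFun hg (negIdx i.1)
    rw [Finset.sum_apply] at hkey
    rw [Finset.sum_eq_single i] at hkey
    · have g1 : negIdx i.1 ≠ idxOne d hd1 :=
        idx_ne (show (-(i.1.1) : ℤ) ≠ 1 by have := i.2; omega)
      have g2 : negIdx i.1 ≠ negIdx (idxOne d hd1) :=
        idx_ne (show (-(i.1.1) : ℤ) ≠ -1 by have := i.2; omega)
      have g3 : negIdx i.1 ≠ i.1 :=
        idx_ne (show (-(i.1.1) : ℤ) ≠ i.1.1 by have := i.2; omega)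
      have hval : vMinusOne hd1 k i.1 (negIdx i.1)
          = -(1 + Complex.exp (Complex.I * ((kc k (idxOne d hd1) : ℝ) : ℂ))) := by
        simp [v_apply, g1, g2, g3]
      rw [Pi.smul_apply, hval, Pi.zero_apply, smul_eq_mul] at hkey
      rcases mul_eq_zero.mp hkey with h | h
      · exact h
      · exact absurd (neg_eq_zero.mp h) hne
    · intro j _ hj
      have g1 : negIdx i.1 ≠ idxOne d hd1 :=
        idx_ne (show (-(i.1.1) : ℤ) ≠ 1 by have := i.2; omega)
      have g2 : negIdx i.1 ≠ negIdx (idxOne d hd1) :=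
        idx_ne (show (-(i.1.1) : ℤ) ≠ -1 by have := i.2; omega)
      have g3 : negIdx i.1 ≠ j.1 :=
        idx_ne (show (-(i.1.1) : ℤ) ≠ j.1.1 by have := i.2; have := j.2; omega)
      have g4 : negIdx i.1 ≠ negIdx j.1 := by
        intro h
        exact hj (Subtype.ext (Subtype.ext (by
          have := congrArg Subtype.val h
          simp only [negIdx] at this
          omega)))
      have hval : vMinusOne hd1 k j.1 (negIdx i.1) = 0 := by
        simp [v_apply, g1, g2, g3, g4]
      rw [Pi.smul_apply, hval, smul_zero]
    · intro h
      exact absurd (Finset.mem_univ i) h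
  refine ⟨hpart1, hpart2, ?_⟩
  have hmem : ∀ i : {ι : Idx d // 2 ≤ ι.1},
      vMinusOne hd1 k i.1 ∈ Module.End.eigenspace (Matrix.toLin' (matA k)) (-1) := by
    intro i
    rw [Module.End.mem_eigenspace_iff, Matrix.toLin'_apply, hpart1 i.1 i.2]
    simp
  let u : {ι : Idx d // 2 ≤ ι.1} → Module.End.eigenspace (Matrix.toLin' (matA k)) (-1) :=
    fun i => ⟨vMinusOne hd1 k i.1, hmem i⟩
  have hu : LinearIndependent ℂ u :=
    LinearIndependent.of_comp
      (Module.End.eigenspace (Matrix.toLin' (matA k)) (-1)).subtype (by exact hpart2)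
  have hcard := hu.fintype_card_le_finrank
  rwa [card_sub d hd] at hcard

end
end

section
/- Fix an integer d ≥ 2, k ∈ [−π,π]^d, and a real number z with |z| < 1/(2d−1), and set μ_z = 2dz/(1 + (2d−1)z²). Then |μ_z·D̂(k)| < 1 and the non-backtracking walk generating function is proportional to the simple random walk Green's function: Σ_{n=0}^∞ b̂_n(k) z^n = [(1 − z²)/(1 + (2d−1)z²)] · 1/(1 − μ_z·D̂(k)). -/
open scoped BigOperators
open Matrix

noncomputable section

/-!
Read a non-backtracking walk as its sequence of steps `e_ι`, `ι ∈ I`, in which `-ι` never follows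
`ι`. The Fourier weight `e^{ik·ω_n}` is the product of the phases `e^{ik·e_ι}` of the steps, so
`b̂_n(k)` is a weighted sum over chains in `I` for the relation `κ ≠ -ι`. Splitting off the first
step, and using that the phases of `ι` and `-ι` multiply to `1` and add up over `I` to `2d D̂(k)`,
gives `b̂_{n+3} = 2dD̂ b̂_{n+2} - (2d-1) b̂_{n+1}`, with `b̂_0 = 1`, `b̂_1 = 2dD̂` and
`b̂_2 = (2dD̂)² - 2d`. Hence `(1 - 2dD̂ z + (2d-1) z²) Σ b̂_n zⁿ = 1 - z²`; the series converges for
`(2d-1)|z| < 1` since a chain has at most `2d - 1` continuations, and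
`1 - 2dD̂ z + (2d-1) z² = (1 + (2d-1) z²)(1 - μ_z D̂)`.
-/

open Finset Function

section ChainSum

variable {α R : Type*} [Fintype α] [CommRing R] (r : α → α → Prop) [DecidableRel r] (φ : α → R)

def chainSum (n : ℕ) : R :=
  ∑ s : Fin n → α with (List.ofFn s).IsChain r, ∏ i, φ (s i)

def chainSumFrom (n : ℕ) (a : α) : R :=
  ∑ s : Fin n → α with (a :: List.ofFn s).IsChain r, φ a * ∏ i, φ (s i)

lemma Fintype.sum_fun_fin_succ {M : Type*} [AddCommMonoid M] {n : ℕ} (f : (Fin (n + 1) → α) → M) :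
    ∑ s, f s = ∑ a, ∑ t : Fin n → α, f (Fin.cons a t) := by
  rw [← Fintype.sum_prod_type']
  exact Fintype.sum_equiv (Fin.consEquiv fun _ => α).symm _ _ (fun s => by simp)

@[simp] lemma chainSum_zero : chainSum r φ 0 = 1 := by
  simp [chainSum]

lemma chainSum_succ (n : ℕ) : chainSum r φ (n + 1) = ∑ a, chainSumFrom r φ n a := by
  simp only [chainSum, chainSumFrom, sum_filter]
  rw [Fintype.sum_fun_fin_succ]
  simp [Fin.prod_univ_succ]

@[simp] lemma chainSumFrom_zero (a : α) : chainSumFrom r φ 0 a = φ a := by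
  simp [chainSumFrom]

lemma chainSumFrom_succ (n : ℕ) (a : α) :
    chainSumFrom r φ (n + 1) a = φ a * ∑ b with r a b, chainSumFrom r φ n b := by
  simp only [chainSumFrom, sum_filter]
  rw [Fintype.sum_fun_fin_succ]
  simp [Fin.prod_univ_succ, List.isChain_cons_cons, ite_and, mul_sum]

end ChainSum

section Bounds

variable {α 𝕜 : Type*} [Fintype α] [NormedField 𝕜] (r : α → α → Prop) [DecidableRel r]
  {φ : α → 𝕜} {D : ℕ}

lemma norm_chainSumFrom_le (hφ : ∀ a, ‖φ a‖ ≤ 1) (hD : ∀ a, #{b | r a b} ≤ D) (n : ℕ) (a : α) :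
    ‖chainSumFrom r φ n a‖ ≤ D ^ n := by
  induction n generalizing a with
  | zero => simpa using hφ a
  | succ n ih =>
    calc ‖chainSumFrom r φ (n + 1) a‖
        ≤ ‖φ a‖ * ∑ b with r a b, ‖chainSumFrom r φ n b‖ := by
          rw [chainSumFrom_succ, norm_mul]; gcongr; exact norm_sum_le _ _
      _ ≤ 1 * ∑ b with r a b, (D : ℝ) ^ n := by gcongr with b; exacts [hφ a, ih b]
      _ ≤ D ^ (n + 1) := by
          rw [one_mul, sum_const, nsmul_eq_mul, pow_succ']; gcongr; exact_mod_cast hD a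

lemma norm_chainSum_succ_le (hφ : ∀ a, ‖φ a‖ ≤ 1) (hD : ∀ a, #{b | r a b} ≤ D) (n : ℕ) :
    ‖chainSum r φ (n + 1)‖ ≤ Fintype.card α * D ^ n := by
  rw [chainSum_succ]
  calc ‖∑ a, chainSumFrom r φ n a‖ ≤ ∑ a : α, (D : ℝ) ^ n :=
        (norm_sum_le _ _).trans (sum_le_sum fun a _ => norm_chainSumFrom_le r hφ hD n a)
    _ = Fintype.card α * D ^ n := by simp

lemma summable_chainSum_mul_pow [CompleteSpace 𝕜] (hφ : ∀ a, ‖φ a‖ ≤ 1)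
    (hD : ∀ a, #{b | r a b} ≤ D) {z : 𝕜} (hz : D * ‖z‖ < 1) :
    Summable fun n => chainSum r φ n * z ^ n := by
  refine (summable_nat_add_iff 1).mp (Summable.of_norm_bounded
    ((summable_geometric_of_lt_one (by positivity) hz).mul_left (Fintype.card α * ‖z‖)) fun n => ?_)
  rw [norm_mul, norm_pow]
  calc ‖chainSum r φ (n + 1)‖ * ‖z‖ ^ (n + 1) ≤ Fintype.card α * D ^ n * ‖z‖ ^ (n + 1) := by
        gcongr; exact norm_chainSum_succ_le r hφ hD n
    _ = Fintype.card α * ‖z‖ * (D * ‖z‖) ^ n := by ring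

end Bounds

theorem mul_tsum_mul_pow_of_recurrence {R : Type*} [CommRing R] [TopologicalSpace R]
    [IsTopologicalRing R] [T2Space R] {u : ℕ → R} {p q z : R}
    (hu : Summable fun n => u n * z ^ n) (hrec : ∀ n, u (n + 3) = p * u (n + 2) + q * u (n + 1)) :
    (1 - p * z - q * z ^ 2) * ∑' n, u n * z ^ n
      = u 0 + (u 1 - p * u 0) * z + (u 2 - p * u 1 - q * u 0) * z ^ 2 := by
  obtain ⟨G, hG⟩ := hu
  have h1 := (hasSum_nat_add_iff' 1).mpr hG
  have h2 := (hasSum_nat_add_iff' 2).mpr hG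
  have h3 := (hasSum_nat_add_iff' 3).mpr hG
  have hshift : (fun n => u (n + 3) * z ^ (n + 3)) = fun n =>
      p * z * (u (n + 2) * z ^ (n + 2)) + q * z ^ 2 * (u (n + 1) * z ^ (n + 1)) := by
    funext n; rw [hrec]; ring
  have key := h3.unique (hshift ▸ (h2.mul_left (p * z)).add (h1.mul_left (q * z ^ 2)))
  simp only [sum_range_succ, sum_range_zero] at key
  rw [hG.tsum_eq]
  linear_combination key

lemma tsum_natCard_fiber_smul {β X M : Type*} [Fintype β] [AddCommMonoid M] [TopologicalSpace M]
    (e : β → X) (g : X → M) : ∑' x, Nat.card {b // e b = x} • g x = ∑ b, g (e b) := by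
  classical
  simp only [Nat.card_eq_fintype_card, Fintype.card_subtype]
  rw [sum_comp, tsum_eq_sum fun x hx => ?_]
  rw [filter_false_of_mem fun b _ (hb : e b = x) => hx (hb ▸ mem_image_of_mem e (mem_univ b)),
    card_empty, zero_smul]

section NonBacktracking

variable {α R : Type*} [Fintype α] [DecidableEq α] [CommRing R] {σ : α → α} {φ : α → R}

lemma chainSumFrom_succ_of_ne (n : ℕ) (a : α) :
    chainSumFrom (fun a b => b ≠ σ a) φ (n + 1) a
      = φ a * (chainSum (fun a b => b ≠ σ a) φ (n + 1)
          - chainSumFrom (fun a b => b ≠ σ a) φ n (σ a)) := by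
  rw [chainSumFrom_succ, filter_ne', sum_erase_eq_sub (mem_univ _), chainSum_succ]

lemma mul_chainSumFrom_succ_of_ne (hφ : ∀ a, φ a * φ (σ a) = 1) (n : ℕ) (a : α) :
    φ (σ a) * chainSumFrom (fun a b => b ≠ σ a) φ (n + 1) a
      = chainSum (fun a b => b ≠ σ a) φ (n + 1) - chainSumFrom (fun a b => b ≠ σ a) φ n (σ a) := by
  rw [chainSumFrom_succ_of_ne, ← mul_assoc, mul_comm (φ (σ a)), hφ, one_mul]

lemma chainSum_ne_one : chainSum (fun a b => b ≠ σ a) φ 1 = ∑ a, φ a := by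
  simp [chainSum_succ]

lemma chainSum_ne_two (hφ : ∀ a, φ a * φ (σ a) = 1) :
    chainSum (fun a b => b ≠ σ a) φ 2 = (∑ a, φ a) ^ 2 - Fintype.card α := by
  have hF (a : α) : chainSumFrom (fun a b => b ≠ σ a) φ 1 a = φ a * ∑ b, φ b - 1 := by
    rw [chainSumFrom_succ_of_ne 0 a, zero_add, chainSum_ne_one, chainSumFrom_zero, mul_sub, hφ]
  rw [chainSum_succ, sum_congr rfl fun a _ => hF a, sum_sub_distrib, ← sum_mul, sum_const,
    card_univ, nsmul_one]
  ring

theorem chainSum_ne_add_three (hσ : Involutive σ) (hφ : ∀ a, φ a * φ (σ a) = 1) (n : ℕ) :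
    chainSum (fun a b => b ≠ σ a) φ (n + 3)
      = (∑ a, φ a) * chainSum (fun a b => b ≠ σ a) φ (n + 2)
        - (Fintype.card α - 1) * chainSum (fun a b => b ≠ σ a) φ (n + 1) := by
  have hσsum (g : α → R) : ∑ a, g (σ a) = ∑ a, g a := Equiv.sum_comp hσ.toPerm g
  have hback : ∑ a, φ a * chainSumFrom (fun a b => b ≠ σ a) φ (n + 1) (σ a)
      = (Fintype.card α - 1) * chainSum (fun a b => b ≠ σ a) φ (n + 1) := by
    calc _ = ∑ a, φ (σ a) * chainSumFrom (fun a b => b ≠ σ a) φ (n + 1) a := by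
          rw [← hσsum]; simp only [hσ _]
      _ = _ := by
          simp only [mul_chainSumFrom_succ_of_ne hφ, sum_sub_distrib, hσsum, ← chainSum_succ,
            sum_const, card_univ, nsmul_eq_mul]
          ring
  rw [chainSum_succ, ← hback]
  simp_rw [chainSumFrom_succ_of_ne, mul_sub, sum_sub_distrib, ← sum_mul]

theorem mul_tsum_chainSum_ne (hσ : Involutive σ) (hφ : ∀ a, φ a * φ (σ a) = 1)
    [TopologicalSpace R] [IsTopologicalRing R] [T2Space R] {z : R}
    (hs : Summable fun n => chainSum (fun a b => b ≠ σ a) φ n * z ^ n) :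
    (1 - (∑ a, φ a) * z + (Fintype.card α - 1) * z ^ 2)
      * ∑' n, chainSum (fun a b => b ≠ σ a) φ n * z ^ n = 1 - z ^ 2 := by
  have key := mul_tsum_mul_pow_of_recurrence (p := ∑ a, φ a) (q := -(Fintype.card α - 1)) hs
    fun n => by rw [chainSum_ne_add_three hσ hφ n]; ring
  rw [chainSum_zero, chainSum_ne_one, chainSum_ne_two hφ] at key
  linear_combination key

end NonBacktracking

lemma summable_chainSum_ne_mul_pow {α 𝕜 : Type*} [Fintype α] [DecidableEq α] [NormedField 𝕜]
    [CompleteSpace 𝕜] {σ : α → α} {φ : α → 𝕜} (hφ : ∀ a, ‖φ a‖ ≤ 1) {z : 𝕜}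
    (hz : (Fintype.card α - 1 : ℕ) * ‖z‖ < 1) :
    Summable fun n => chainSum (fun a b => b ≠ σ a) φ n * z ^ n :=
  summable_chainSum_mul_pow _ hφ
    (fun a => by rw [filter_ne', card_erase_of_mem (mem_univ _), card_univ]) hz

section Steps

variable {d : ℕ}

lemma natAbs_le_of_mem_Idx (ι : Idx d) : 1 ≤ ι.1.natAbs ∧ ι.1.natAbs ≤ d := by
  obtain ⟨h0, hl, hr⟩ := mem_Idx ι.2; omega

def idxCoord (ι : Idx d) : Fin d := ⟨ι.1.natAbs - 1, by have := natAbs_le_of_mem_Idx ι; omega⟩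

lemma stepVec_eq_single (ι : Idx d) : stepVec ι = Pi.single (idxCoord ι) ι.1.sign := by
  funext j
  simp [stepVec, Pi.single_apply, idxCoord, Fin.ext_iff]

lemma negIdx_involutive : Involutive (negIdx (d := d)) := fun ι => by
  simp [negIdx]

lemma stepVec_negIdx (ι : Idx d) : stepVec (negIdx ι) = -stepVec ι := by
  simp [stepVec_eq_single, idxCoord, negIdx, Pi.single_neg]

lemma sum_abs_stepVec (ι : Idx d) : ∑ j, |stepVec ι j| = 1 := by
  have hsign : |ι.1.sign| = 1 := by
    rw [Int.abs_sign_of_ne_zero (mem_Idx ι.2).1]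
  simp [stepVec_eq_single, Pi.apply_single (fun _ => abs) (fun _ => abs_zero), hsign]

lemma stepVec_injective : Injective (stepVec (d := d)) := by
  intro ι κ h
  have hsign (ι : Idx d) : ι.1.sign ≠ 0 := mt Int.sign_eq_zero_iff_zero.mp (mem_Idx ι.2).1
  have hcoord : idxCoord ι = idxCoord κ := by
    by_contra hne
    have := congrFun h (idxCoord ι)
    simp [stepVec_eq_single, hne, hsign] at this
  have hs : ι.1.sign = κ.1.sign := by
    simpa [stepVec_eq_single, hcoord] using congrFun h (idxCoord κ)
  have habs : ι.1.natAbs = κ.1.natAbs := by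
    have := congrArg Fin.val hcoord
    have := natAbs_le_of_mem_Idx ι
    have := natAbs_le_of_mem_Idx κ
    simp only [idxCoord] at *
    omega
  exact Subtype.ext (by rw [← Int.sign_mul_natAbs ι.1, ← Int.sign_mul_natAbs κ.1, hs, habs])

lemma exists_eq_single_of_sum_abs_eq_one {ι : Type*} [Fintype ι] [DecidableEq ι] {v : ι → ℤ}
    (hv : ∑ i, |v i| = 1) : ∃ i, |v i| = 1 ∧ v = Pi.single i (v i) := by
  obtain ⟨i, hi⟩ : ∃ i, v i ≠ 0 := by
    by_contra! h
    simp [h] at hv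
  have hsplit := add_sum_erase univ (fun j => |v j|) (mem_univ i)
  have hrest : 0 ≤ ∑ j ∈ univ.erase i, |v j| := sum_nonneg fun j _ => abs_nonneg _
  have hone : |v i| = 1 := by have := Int.one_le_abs hi; omega
  refine ⟨i, hone, funext fun j => ?_⟩
  rcases eq_or_ne j i with rfl | hj
  · simp
  · have hzero : ∑ j ∈ univ.erase i, |v j| = 0 := by omega
    rw [sum_eq_zero_iff_of_nonneg fun j _ => abs_nonneg _] at hzero
    simpa [hj] using hzero j (mem_erase.mpr ⟨hj, mem_univ j⟩)

lemma exists_stepVec_eq {v : Fin d → ℤ} (hv : ∑ j, |v j| = 1) : ∃ ι : Idx d, stepVec ι = v := by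
  obtain ⟨j, hj, hv⟩ := exists_eq_single_of_sum_abs_eq_one hv
  rw [hv]
  generalize v j = u at hj
  have hmem : u * (j + 1) ∈ Idx d := by
    rcases abs_eq (zero_le_one' ℤ) |>.mp hj with rfl | rfl <;>
      exact mem_Idx' (by omega) (by omega) (by omega)
  refine ⟨⟨_, hmem⟩, ?_⟩
  rw [stepVec_eq_single]
  rcases abs_eq (zero_le_one' ℤ) |>.mp hj with rfl | rfl <;>
    · congr 1
      ext; simp [idxCoord]; omega

end Steps

section CoordinateDirections

variable {d : ℕ}

lemma card_Idx : #(Idx d) = 2 * d := by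
  rw [Idx, card_erase_of_mem (mem_Icc.mpr ⟨by omega, by omega⟩), Int.card_Icc]
  omega

def posIdx (j : Fin d) : Idx d := ⟨j + 1, mem_Idx' (by omega) (by omega) (by omega)⟩

lemma stepVec_posIdx (j : Fin d) : stepVec (posIdx j) = Pi.single j 1 := by
  rw [stepVec_eq_single]
  congr 1

lemma sum_Idx {M : Type*} [AddCommMonoid M] (f : Idx d → M) :
    ∑ ι, f ι = ∑ j, (f (posIdx j) + f (negIdx (posIdx j))) := by
  let e (p : Fin d × Bool) : Idx d := if p.2 then posIdx p.1 else negIdx (posIdx p.1)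
  have he : Bijective e := by
    refine (Fintype.bijective_iff_injective_and_card e).mpr ⟨?_, by simp [card_Idx, mul_comm]⟩
    rintro ⟨j, _ | _⟩ ⟨j', _ | _⟩ h <;>
      simp [e, posIdx, negIdx, Subtype.ext_iff, Fin.ext_iff] at h ⊢ <;> omega
  rw [← he.sum_comp, Fintype.sum_prod_type]
  simp [e]

end CoordinateDirections

section Walks

variable {d n : ℕ}

def stepWalk (s : Fin n → Idx d) : Fin (n + 1) → Fin d → ℤ :=
  Fin.partialSum fun i => stepVec (s i)

lemma stepWalk_succ (s : Fin n → Idx d) (i : ℕ) (hi : i < n) :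
    stepWalk s ⟨i + 1, by omega⟩ = stepWalk s ⟨i, by omega⟩ + stepVec (s ⟨i, hi⟩) :=
  Fin.partialSum_succ _ ⟨i, hi⟩

lemma stepWalk_last (s : Fin n → Idx d) : stepWalk s (Fin.last n) = ∑ i, stepVec (s i) := by
  rw [stepWalk, Fin.partialSum, Fin.val_last, List.take_of_length_le (by simp), List.sum_ofFn]

lemma stepWalk_injective : Injective (stepWalk : (Fin n → Idx d) → _) := by
  intro s t h
  funext i
  apply stepVec_injective
  rw [← Fin.partialSum_right_neg (fun i => stepVec (s i)) i,
    ← Fin.partialSum_right_neg (fun i => stepVec (t i)) i]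
  exact congrArg (fun ω => -ω i.castSucc + ω i.succ) h

lemma stepWalk_add_two_ne_iff (s : Fin n → Idx d) (i : ℕ) (hi : i + 1 < n) :
    stepWalk s ⟨i + 2, by omega⟩ ≠ stepWalk s ⟨i, by omega⟩
      ↔ s ⟨i + 1, hi⟩ ≠ negIdx (s ⟨i, by omega⟩) := by
  rw [stepWalk_succ s (i + 1) hi, stepWalk_succ s i (by omega), add_assoc, Ne, add_eq_left,
    add_comm, ← eq_neg_iff_add_eq_zero, ← stepVec_negIdx, stepVec_injective.eq_iff]

lemma isNBW_stepWalk_iff (s : Fin n → Idx d) :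
    IsNBW d n (stepWalk s) ↔ (List.ofFn s).IsChain fun a b => b ≠ negIdx a := by
  have hstep (i : ℕ) (hi : i < n) :
      ∑ j, |stepWalk s ⟨i + 1, by omega⟩ j - stepWalk s ⟨i, by omega⟩ j| = 1 := by
    simp [stepWalk_succ s i hi, sum_abs_stepVec]
  rw [List.isChain_ofFn]
  exact ⟨fun h i hi => (stepWalk_add_two_ne_iff s i hi).mp (h.2.2 i hi),
    fun h => ⟨Fin.partialSum_zero _, hstep,
      fun i hi => (stepWalk_add_two_ne_iff s i hi).mpr (h i hi)⟩⟩

lemma exists_stepWalk_eq {ω : Fin (n + 1) → Fin d → ℤ} (hω : IsNBW d n ω) :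
    ∃ s : Fin n → Idx d, stepWalk s = ω := by
  have (i : Fin n) : ∃ ι, stepVec ι = ω i.succ - ω i.castSucc :=
    exists_stepVec_eq (hω.2.1 i i.2)
  choose s hs using this
  refine ⟨s, ?_⟩
  conv_rhs => rw [← Fin.partialSum_left_neg ω, hω.1, zero_vadd]
  simp only [stepWalk, hs, neg_add_eq_sub]

lemma bc_eq_natCard (n : ℕ) (x : Fin d → ℤ) :
    bc d n x = Nat.card {s : {s : Fin n → Idx d // (List.ofFn s).IsChain fun a b => b ≠ negIdx a} //
      ∑ i, stepVec (s.1 i) = x} := by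
  refine (Nat.card_eq_of_bijective (fun s => ⟨stepWalk s.1.1,
    (isNBW_stepWalk_iff _).mpr s.1.2, (stepWalk_last _).trans s.2⟩) ⟨?_, ?_⟩).symm
  · intro s t h
    exact Subtype.ext (Subtype.ext (stepWalk_injective (congrArg Subtype.val h)))
  · rintro ⟨ω, hω, hx⟩
    obtain ⟨s, rfl⟩ := exists_stepWalk_eq hω
    exact ⟨⟨⟨s, (isNBW_stepWalk_iff s).mp hω⟩, (stepWalk_last s).symm.trans hx⟩, rfl⟩

end Walks

section PlaneWave

variable {d : ℕ} (k : Fin d → ℝ)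

def planeWave (x : Fin d → ℤ) : ℂ := Complex.exp (Complex.I * ∑ j, (k j : ℂ) * (x j : ℂ))

lemma planeWave_sum {n : ℕ} (v : Fin n → Fin d → ℤ) :
    planeWave k (∑ i, v i) = ∏ i, planeWave k (v i) := by
  simp only [planeWave, ← Complex.exp_sum, Finset.sum_apply, Int.cast_sum, mul_sum]
  rw [sum_comm]

lemma planeWave_mul_planeWave_neg (x : Fin d → ℤ) : planeWave k x * planeWave k (-x) = 1 := by
  simp [planeWave, ← Complex.exp_add]

lemma norm_planeWave (x : Fin d → ℤ) : ‖planeWave k x‖ = 1 := by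
  rw [planeWave, mul_comm, ← Complex.norm_exp_ofReal_mul_I (∑ j, k j * x j)]
  push_cast
  rfl

lemma planeWave_single (j : Fin d) (c : ℤ) :
    planeWave k (Pi.single j c) = Complex.exp (Complex.I * (k j * c)) := by
  simp [planeWave, Pi.single_apply]

lemma sum_planeWave_stepVec :
    ∑ ι, planeWave k (stepVec ι) = 2 * d * Dhat k := by
  have hcos : ∑ j, Real.cos (k j) = d * Dhat k := by
    rcases Nat.eq_zero_or_pos d with rfl | hd
    · simp
    · rw [Dhat]; field_simp
  rw [mul_assoc, ← Complex.ofReal_natCast, ← Complex.ofReal_mul, ← hcos, Complex.ofReal_sum]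
  simp only [sum_Idx, stepVec_negIdx, stepVec_posIdx, ← Pi.single_neg, planeWave_single, mul_sum]
  refine sum_congr rfl fun j _ => ?_
  rw [Complex.ofReal_cos, Complex.cos]
  push_cast
  ring_nf

lemma bhat_eq_chainSum (n : ℕ) :
    bhat d n k = chainSum (fun a b => b ≠ negIdx a) (fun ι => planeWave k (stepVec ι)) n := by
  have hfiber := tsum_natCard_fiber_smul
    (fun s : {s : Fin n → Idx d // (List.ofFn s).IsChain fun a b => b ≠ negIdx a} =>
      ∑ i, stepVec (s.1 i)) (planeWave k)
  simp only [← bc_eq_natCard, planeWave_sum] at hfiber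
  rw [bhat, fhat]
  simp only [← nsmul_eq_mul]
  refine hfiber.trans ?_
  rw [chainSum, sum_subtype _ fun s => mem_filter_univ s]

end PlaneWave

lemma abs_Dhat_le_one {d : ℕ} (k : Fin d → ℝ) : |Dhat k| ≤ 1 := by
  have hsum : |∑ j, Real.cos (k j)| ≤ d := (abs_sum_le_sum_abs _ _).trans <|
    (sum_le_sum fun j (_ : j ∈ univ) => Real.abs_cos_le_one (k j)).trans (by simp)
  calc |Dhat k| = (d : ℝ)⁻¹ * |∑ j, Real.cos (k j)| := by
        rw [Dhat, abs_mul, one_div, abs_inv, Nat.abs_cast]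
    _ ≤ (d : ℝ)⁻¹ * d := by gcongr
    _ ≤ 1 := inv_mul_le_one_of_le₀ le_rfl (Nat.cast_nonneg d)

lemma abs_div_one_add_mul_sq_mul_lt_one {q z D : ℝ} (hq : 1 ≤ q) (hz : q * |z| < 1) (hD : |D| ≤ 1) :
    |(q + 1) * z / (1 + q * z ^ 2) * D| < 1 := by
  have hz1 : |z| < 1 := by nlinarith [abs_nonneg z]
  have hpos : 0 < 1 + q * z ^ 2 := by positivity
  have hnum : (q + 1) * |z| < 1 + q * z ^ 2 := by
    nlinarith [mul_pos (sub_pos.mpr hz) (sub_pos.mpr hz1), sq_abs z]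
  rw [abs_mul, abs_div, abs_mul, abs_of_pos hpos, abs_of_pos (by linarith : 0 < q + 1)]
  calc (q + 1) * |z| / (1 + q * z ^ 2) * |D| ≤ (q + 1) * |z| / (1 + q * z ^ 2) * 1 := by gcongr
    _ < 1 := by rwa [mul_one, div_lt_one hpos]

section GeneratingFunction

variable {d : ℕ} (k : Fin d → ℝ)

theorem summable_bhat_mul_pow (hd : 1 ≤ d) {z : ℂ} (hz : (2 * d - 1) * ‖z‖ < 1) :
    Summable fun n => bhat d n k * z ^ n := by
  have hcard : ((#(Idx d) - 1 : ℕ) : ℝ) = 2 * d - 1 := by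
    rw [card_Idx, Nat.cast_sub (by omega)]; push_cast; ring
  simp only [bhat_eq_chainSum]
  exact summable_chainSum_ne_mul_pow (fun ι => (norm_planeWave k (stepVec ι)).le)
    (by simpa [hcard])

theorem mul_tsum_bhat_mul_pow {z : ℂ} (hs : Summable fun n => bhat d n k * z ^ n) :
    (1 - 2 * d * Dhat k * z + (2 * d - 1) * z ^ 2) * ∑' n, bhat d n k * z ^ n = 1 - z ^ 2 := by
  simp only [bhat_eq_chainSum] at hs ⊢
  have hgen := mul_tsum_chainSum_ne negIdx_involutive
    (fun ι => by rw [stepVec_negIdx, planeWave_mul_planeWave_neg]) hs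
  rwa [sum_planeWave_stepVec, Fintype.card_coe, card_Idx, Nat.cast_mul, Nat.cast_two] at hgen

end GeneratingFunction

theorem nbw_green_vs_srw_green_general (d : ℕ) (k : Fin d → ℝ) (z : ℝ)
    (hz : |z| < 1 / (2 * d - 1)) :
    |(2 * d * z / (1 + (2 * d - 1) * z ^ 2)) * Dhat k| < 1 ∧
    HasSum (fun n : ℕ => bhat d n k * (z : ℂ) ^ n)
      (((1 - z ^ 2) / (1 + (2 * d - 1) * z ^ 2) : ℝ) *
        (1 / (1 - ((2 * d * z / (1 + (2 * d - 1) * z ^ 2)) * Dhat k : ℝ)))) := by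
  have hd : 1 ≤ d := Nat.one_le_iff_ne_zero.mpr fun h => by
    norm_num [h] at hz; linarith [abs_nonneg z]
  have hdR : (1 : ℝ) ≤ d := by exact_mod_cast hd
  have hdz : (2 * d - 1) * |z| < 1 := by rwa [lt_div_iff₀' (by linarith)] at hz
  have hμ := abs_div_one_add_mul_sq_mul_lt_one (by linarith) hdz (abs_Dhat_le_one k)
  rw [sub_add_cancel] at hμ
  refine ⟨hμ, ?_⟩
  have hs := summable_bhat_mul_pow k hd (z := z) (by simpa using hdz)
  set P := 1 + (2 * d - 1) * z ^ 2
  set μ := 2 * d * z / P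
  have hP : P ≠ 0 := by nlinarith [sq_nonneg z]
  have hμ' : 1 - μ * Dhat k ≠ 0 := by linarith [(abs_lt.mp hμ).2]
  have hfactor : 1 - 2 * d * Dhat k * z + (2 * d - 1) * z ^ 2 = P * (1 - μ * Dhat k) := by
    simp only [μ]; field_simp; ring
  have hgen : ((P * (1 - μ * Dhat k) : ℝ) : ℂ) * ∑' n, bhat d n k * (z : ℂ) ^ n = 1 - z ^ 2 := by
    rw [← hfactor]; push_cast; exact mul_tsum_bhat_mul_pow k hs
  suffices hG : ∑' n, bhat d n k * (z : ℂ) ^ n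
      = ((1 - z ^ 2) / P : ℝ) * (1 / (1 - (μ * Dhat k : ℝ))) from hG ▸ hs.hasSum
  apply mul_left_cancel₀ (Complex.ofReal_ne_zero.mpr (mul_ne_zero hP hμ'))
  rw [hgen]
  have h : 1 - z ^ 2 = P * (1 - μ * Dhat k) * ((1 - z ^ 2) / P * (1 / (1 - μ * Dhat k))) := by
    field_simp
  exact_mod_cast h

/-- with `μ_z = 2dz/(1+(2d−1)z²)` one has `|μ_z·D̂(k)| < 1` and
`Σ_n b̂_n(k) zⁿ = [(1−z²)/(1+(2d−1)z²)] · 1/(1 − μ_z·D̂(k))`. -/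
theorem nbw_green_vs_srw_green (d : ℕ) (hd : 2 ≤ d) (k : Fin d → ℝ)
    (hk : ∀ j, k j ∈ Set.Icc (-Real.pi) Real.pi) (z : ℝ)
    (hz : |z| < 1 / (2 * d - 1)) :
    |(2 * d * z / (1 + (2 * d - 1) * z ^ 2)) * Dhat k| < 1 ∧
    HasSum (fun n : ℕ => bhat d n k * (z : ℂ) ^ n)
      (((1 - z ^ 2) / (1 + (2 * d - 1) * z ^ 2) : ℝ) *
        (1 / (1 - ((2 * d * z / (1 + (2 * d - 1) * z ^ 2)) * Dhat k : ℝ)))) :=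
  nbw_green_vs_srw_green_general d k z hz

end
end
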